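/- Let ρ(d) be the number of roots of n² + 1 modulo d. Then for every real x ≥ 1, Σ_{d ≤ x} ρ(d) ≤ x. -/

import Mathlib

/-!
The function `ρ` is multiplicative by the Chinese remainder theorem. For an odd prime `p`,
`ZMod (p ^ k)` is a local ring in which `2` is a unit, so `x² = -1` has either no solution or
exactly the two solutions `±x₀`; a solution exists iff `p ≡ 1 (mod 4)`, by Hensel's lemma
in `ℤ_[p]`.
Comparing prime powers gives `ρ = μ² * χ₄`, hence
`∑_{d ≤ N} ρ d = ∑_{a ≤ N} μ(a)² ∑_{b ≤ N / a} χ₄ b ≤ N`,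
because the partial sums of `χ₄` lie in `{0, 1}`.
-/

open Polynomial IsLocalRing ArithmeticFunction ZMod Finset
open scoped ArithmeticFunction.Moebius

abbrev sqrtsNegOne (R : Type*) [CommRing R] : Set R := {x | x ^ 2 + 1 = 0}

section sqrtsNegOne

variable {R S : Type*} [CommRing R] [CommRing S]

theorem mem_sqrtsNegOne {x : R} : x ∈ sqrtsNegOne R ↔ x ^ 2 + 1 = 0 := Iff.rfl

theorem isUnit_of_mem_sqrtsNegOne {x : R} (hx : x ∈ sqrtsNegOne R) : IsUnit x :=
  .of_mul_eq_one (-x) (by linear_combination -hx.out)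

theorem map_mem_sqrtsNegOne (f : R →+* S) {x : R} (hx : x ∈ sqrtsNegOne R) :
    f x ∈ sqrtsNegOne S := by
  rw [mem_sqrtsNegOne, ← map_pow, ← map_one f, ← map_add, hx.out, _root_.map_zero]

theorem sqrtsNegOne_eq_empty_of_ringHom (f : R →+* S) (h : sqrtsNegOne S = ∅) :
    sqrtsNegOne R = ∅ :=
  Set.eq_empty_of_forall_notMem fun _ hx => h.subset (map_mem_sqrtsNegOne f hx)

theorem natCard_sqrtsNegOne_congr (e : R ≃+* S) :
    Nat.card (sqrtsNegOne R) = Nat.card (sqrtsNegOne S) :=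
  Nat.card_congr <| e.toEquiv.subtypeEquiv fun _ =>
    ⟨map_mem_sqrtsNegOne e.toRingHom,
      fun h => by simpa using map_mem_sqrtsNegOne e.symm.toRingHom h⟩

theorem sqrtsNegOne_prod : sqrtsNegOne (R × S) = sqrtsNegOne R ×ˢ sqrtsNegOne S :=
  Set.ext fun _ => Prod.ext_iff

theorem natCard_sqrtsNegOne_prod :
    Nat.card (sqrtsNegOne (R × S)) = Nat.card (sqrtsNegOne R) * Nat.card (sqrtsNegOne S) := by
  rw [sqrtsNegOne_prod, Nat.card_congr (Equiv.Set.prod _ _), Nat.card_prod]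

theorem IsLocalRing.eq_or_eq_neg_of_sq_eq_sq [IsLocalRing R] (h2 : IsUnit (2 : R)) {x y : R}
    (hx : IsUnit x) (h : x ^ 2 = y ^ 2) : x = y ∨ x = -y := by
  have hprod : (x - y) * (x + y) = 0 := by linear_combination h
  -- `(x - y) + (x + y) = 2 * x` is a unit, so one of the two factors is.
  rcases isUnit_or_isUnit_of_isUnit_add (a := x - y) (b := x + y) (by
    convert h2.mul hx using 1; ring) with h | h
  · exact .inr (eq_neg_of_add_eq_zero_left (h.mul_right_eq_zero.mp hprod))
  · exact .inl (sub_eq_zero.mp (h.mul_left_eq_zero.mp hprod))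

theorem IsLocalRing.sqrtsNegOne_eq_pair [IsLocalRing R] (h2 : IsUnit (2 : R)) {x₀ : R}
    (hx₀ : x₀ ∈ sqrtsNegOne R) : sqrtsNegOne R = {x₀, -x₀} := by
  ext x
  refine ⟨fun hx => eq_or_eq_neg_of_sq_eq_sq h2 (isUnit_of_mem_sqrtsNegOne hx)
    (by linear_combination hx.out - hx₀.out), ?_⟩
  rintro (rfl | rfl)
  · exact hx₀
  · simpa [mem_sqrtsNegOne] using hx₀

theorem IsLocalRing.natCard_sqrtsNegOne [IsLocalRing R] (h2 : IsUnit (2 : R)) {x₀ : R}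
    (hx₀ : x₀ ∈ sqrtsNegOne R) : Nat.card (sqrtsNegOne R) = 2 := by
  have hne : x₀ ≠ -x₀ := fun h =>
    (h2.mul (isUnit_of_mem_sqrtsNegOne hx₀)).ne_zero (by linear_combination h)
  rw [Nat.card_coe_set_eq, sqrtsNegOne_eq_pair h2 hx₀, Set.ncard_pair hne]

end sqrtsNegOne

theorem PadicInt.exists_mem_sqrtsNegOne {p : ℕ} [Fact p.Prime] (hp : p % 4 = 1) :
    ∃ z : ℤ_[p], z ∈ sqrtsNegOne ℤ_[p] := by
  obtain ⟨y, hy⟩ := ZMod.exists_sq_eq_neg_one_iff.mpr (by omega : p % 4 ≠ 3)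
  obtain ⟨a, rfl⟩ := ZMod.ringHom_surjective PadicInt.toZMod y
  have hroot : a ^ 2 + 1 ∈ maximalIdeal ℤ_[p] := by
    rw [← PadicInt.ker_toZMod, RingHom.mem_ker, map_add, map_pow, map_one]
    linear_combination -hy
  have hunit : IsUnit (2 * a) := by
    have h2 : (2 : ZMod p) ≠ 0 := Ring.two_ne_zero (by rw [ZMod.ringChar_zmod_n]; omega)
    have ha : PadicInt.toZMod a ≠ 0 := fun h => by simp [h] at hy
    rw [← isUnit_map_iff PadicInt.toZMod, map_mul, map_ofNat]
    exact (mul_ne_zero h2 ha).isUnit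
  have hderiv : (X ^ 2 + 1 : ℤ_[p][X]).derivative.eval a = 2 * a := by simp [one_add_one_eq_two]
  obtain ⟨z, hz, -⟩ := HenselianRing.is_henselian (X ^ 2 + 1 : ℤ_[p][X]) (by monicity!) a
    (by simpa only [eval_add, eval_pow, eval_X, eval_one] using hroot)
    (hderiv ▸ hunit.map (Ideal.Quotient.mk _))
  exact ⟨z, by simpa [mem_sqrtsNegOne] using hz⟩

theorem ZMod.isLocalRing_prime_pow (p : ℕ) [Fact p.Prime] {k : ℕ} (hk : k ≠ 0) :
    IsLocalRing (ZMod (p ^ k)) :=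
  have : Nontrivial (ZMod (p ^ k)) :=
    ZMod.nontrivial_iff.mpr (Nat.pow_eq_one.not.mpr (by simp [(Fact.out : p.Prime).ne_one, hk]))
  .of_surjective' (PadicInt.toZModPow k) (ZMod.ringHom_surjective _)

theorem sqrtsNegOne_int : sqrtsNegOne ℤ = ∅ :=
  Set.eq_empty_of_forall_notMem fun y hy => (by positivity : 0 < y ^ 2 + 1).ne' hy

-- `ZMod 0 = ℤ` has no square root of `-1`, so the value at `0` is `0`.
noncomputable def sqrtNegOneCount : ArithmeticFunction ℤ where
  toFun d := Nat.card (sqrtsNegOne (ZMod d))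
  map_zero' := by
    rw [sqrtsNegOne_eq_empty_of_ringHom (castHom (dvd_refl 0) ℤ) sqrtsNegOne_int]
    simp

theorem sqrtNegOneCount_apply (d : ℕ) : sqrtNegOneCount d = Nat.card (sqrtsNegOne (ZMod d)) := rfl

theorem sqrtNegOneCount_apply_eq_card_filter (d : ℕ) :
    sqrtNegOneCount d = ((range d).filter fun m : ℕ => (d : ℤ) ∣ (m : ℤ) ^ 2 + 1).card := by
  rcases eq_or_ne d 0 with rfl | hd
  · simp
  have : NeZero d := ⟨hd⟩
  have key (m : ℕ) : (d : ℤ) ∣ (m : ℤ) ^ 2 + 1 ↔ (m : ZMod d) ^ 2 + 1 = 0 := by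
    rw [← ZMod.intCast_zmod_eq_zero_iff_dvd]
    push_cast
    rfl
  rw [sqrtNegOneCount_apply, Nat.card_coe_set_eq, Set.ncard_eq_toFinset_card']
  congr 1
  refine card_nbij' ZMod.val (Nat.cast : ℕ → ZMod d) ?_ ?_ ?_ ?_ <;> intro x hx <;>
    simp_all [ZMod.val_lt, Nat.mod_eq_of_lt]

theorem isMultiplicative_sqrtNegOneCount : sqrtNegOneCount.IsMultiplicative := by
  refine ⟨?_, fun {m n} hmn => ?_⟩
  · rw [sqrtNegOneCount_apply, Nat.card_eq_fintype_card]
    rfl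
  · simp only [sqrtNegOneCount_apply, ← Nat.cast_mul,
      natCard_sqrtsNegOne_congr (chineseRemainder hmn), natCard_sqrtsNegOne_prod]

theorem sqrtNegOneCount_two : sqrtNegOneCount 2 = 1 := by
  rw [sqrtNegOneCount_apply, Nat.card_eq_fintype_card]
  rfl

theorem sqrtNegOneCount_apply_of_sqrtsNegOne_eq_empty {d : ℕ} (h : sqrtsNegOne (ZMod d) = ∅) :
    sqrtNegOneCount d = 0 := by
  rw [sqrtNegOneCount_apply, h]
  simp

theorem sqrtNegOneCount_apply_of_four_dvd {d : ℕ} (h : 4 ∣ d) : sqrtNegOneCount d = 0 :=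
  sqrtNegOneCount_apply_of_sqrtsNegOne_eq_empty <|
    sqrtsNegOne_eq_empty_of_ringHom (castHom h (ZMod 4))
      (by simp only [Set.eq_empty_iff_forall_notMem, mem_sqrtsNegOne]; decide)

theorem sqrtNegOneCount_apply_prime_pow_of_mod_four_eq_three {p k : ℕ} (hp : p.Prime)
    (h3 : p % 4 = 3) (hk : k ≠ 0) : sqrtNegOneCount (p ^ k) = 0 := by
  have := Fact.mk hp
  refine sqrtNegOneCount_apply_of_sqrtsNegOne_eq_empty <|
    sqrtsNegOne_eq_empty_of_ringHom (castHom (dvd_pow_self p hk) (ZMod p)) <|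
    Set.eq_empty_of_forall_notMem fun y hy => ?_
  exact ZMod.exists_sq_eq_neg_one_iff.mp ⟨y, by linear_combination -hy.out⟩ h3

theorem sqrtNegOneCount_apply_prime_pow_of_mod_four_eq_one {p k : ℕ} (hp : p.Prime)
    (h1 : p % 4 = 1) (hk : k ≠ 0) : sqrtNegOneCount (p ^ k) = 2 := by
  have := Fact.mk hp
  have := ZMod.isLocalRing_prime_pow p hk
  obtain ⟨z, hz⟩ := PadicInt.exists_mem_sqrtsNegOne h1
  have h2 : IsUnit (2 : ZMod (p ^ k)) := by
    rw [← Nat.cast_ofNat, ZMod.isUnit_iff_coprime]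
    exact Nat.Coprime.pow_right k ((Nat.coprime_primes Nat.prime_two hp).mpr (by omega))
  rw [sqrtNegOneCount_apply,
    IsLocalRing.natCard_sqrtsNegOne h2 (map_mem_sqrtsNegOne (PadicInt.toZModPow k) hz),
    Nat.cast_ofNat]

theorem pmul_moebius_mul_apply_prime_pow_succ (f : ArithmeticFunction ℤ) {p : ℕ} (hp : p.Prime)
    (k : ℕ) : (pmul μ μ * f) (p ^ (k + 1)) = f (p ^ (k + 1)) + f (p ^ k) := by
  rw [mul_apply, Nat.sum_divisorsAntidiagonal (fun a b => pmul μ μ a * f b),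
    Nat.sum_divisors_prime_pow hp, sum_range_succ', sum_range_succ']
  have hdiv : p ^ (k + 1) / p = p ^ k := by rw [pow_succ, Nat.mul_div_cancel _ hp.pos]
  simp [pmul_apply, moebius_apply_prime_pow hp, moebius_apply_prime hp, hdiv, add_comm]

theorem toArithmeticFunction_χ₄_apply (n : ℕ) :
    toArithmeticFunction (χ₄ ·) n = χ₄ n := by
  rcases eq_or_ne n 0 with rfl | hn
  · simp [toArithmeticFunction]
  · exact (DirichletCharacter.apply_eq_toArithmeticFunction_apply χ₄ hn).symm

theorem sqrtNegOneCount_eq_pmul_moebius_mul_χ₄ :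
    sqrtNegOneCount = pmul μ μ * toArithmeticFunction (χ₄ ·) := by
  have hmul : (pmul μ μ * toArithmeticFunction (χ₄ ·)).IsMultiplicative :=
    (isMultiplicative_moebius.pmul isMultiplicative_moebius).mul
      (DirichletCharacter.isMultiplicative_toArithmeticFunction χ₄)
  refine (IsMultiplicative.eq_iff_eq_on_prime_powers _ isMultiplicative_sqrtNegOneCount _
    hmul).mpr ?_
  rintro p (_ | k) hp
  · rw [pow_zero, isMultiplicative_sqrtNegOneCount.map_one, hmul.map_one]
  rw [pmul_moebius_mul_apply_prime_pow_succ _ hp, toArithmeticFunction_χ₄_apply,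
    toArithmeticFunction_χ₄_apply, Nat.cast_pow, Nat.cast_pow, map_pow χ₄, map_pow χ₄]
  rcases hp.eq_two_or_odd with rfl | hodd
  · have hχ₂ : χ₄ ((2 : ℕ) : ZMod 4) = 0 := rfl
    rcases k with _ | k
    · rw [zero_add, pow_one, sqrtNegOneCount_two, hχ₂]
      norm_num
    · rw [sqrtNegOneCount_apply_of_four_dvd (Dvd.intro (2 ^ k) (by ring)), hχ₂]
      simp
  rcases (by omega : p % 4 = 1 ∨ p % 4 = 3) with h1 | h3
  · rw [sqrtNegOneCount_apply_prime_pow_of_mod_four_eq_one hp h1 k.succ_ne_zero,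
      χ₄_nat_one_mod_four h1]
    norm_num
  · rw [sqrtNegOneCount_apply_prime_pow_of_mod_four_eq_three hp h3 k.succ_ne_zero,
      χ₄_nat_three_mod_four h3]
    ring

theorem sum_Ioc_χ₄ (M : ℕ) :
    ∑ m ∈ Ioc 0 M, χ₄ m = if M % 4 = 1 ∨ M % 4 = 2 then 1 else 0 := by
  induction M with
  | zero => simp
  | succ M ih =>
    rw [sum_Ioc_succ_top (Nat.zero_le M), ih, χ₄_nat_mod_four,
      show (M + 1) % 4 = (M % 4 + 1) % 4 by omega]
    have : M % 4 < 4 := Nat.mod_lt M (by norm_num)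
    interval_cases M % 4 <;> decide

theorem sum_Ioc_sqrtNegOneCount_le (N : ℕ) : ∑ d ∈ Ioc 0 N, sqrtNegOneCount d ≤ N := by
  rw [sqrtNegOneCount_eq_pmul_moebius_mul_χ₄, sum_Ioc_mul_eq_sum_sum]
  calc _ ≤ ∑ _n ∈ Ioc 0 N, (1 : ℤ) := sum_le_sum fun n _ => ?_
    _ = N := by simp
  simp only [pmul_apply, ← sq, moebius_sq, toArithmeticFunction_χ₄_apply, sum_Ioc_χ₄]
  split_ifs <;> norm_num

theorem stmt_12 (ρ : ℕ → ℕ)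
    (hρ : ∀ d : ℕ, ρ d = ((Finset.range d).filter
      (fun m : ℕ => (d : ℤ) ∣ ((m : ℤ) ^ 2 + 1))).card)
    (x : ℝ) (hx : 1 ≤ x) :
    ∑ d ∈ Finset.Icc 1 ⌊x⌋₊, (ρ d : ℝ) ≤ x := by
  have hρ' (d : ℕ) : (ρ d : ℝ) = sqrtNegOneCount d := by
    rw [hρ, sqrtNegOneCount_apply_eq_card_filter, Int.cast_natCast]
  calc ∑ d ∈ Icc 1 ⌊x⌋₊, (ρ d : ℝ)
        = ((∑ d ∈ Ioc 0 ⌊x⌋₊, sqrtNegOneCount d : ℤ) : ℝ) := by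
        push_cast [hρ']
        rfl
    _ ≤ ⌊x⌋₊ := mod_cast sum_Ioc_sqrtNegOneCount_le _
    _ ≤ x := Nat.floor_le (by linarith)
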